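/- arXiv:1106.5746 — 8 statements merged into one kernel-verified Lean document; each statement's English description precedes it below -/
import Mathlib

section
/- Let A be an index type, let d ≥ 1 be a natural number, and let a : (A →₀ ℕ) → ℝ be a superexponential d-regular admissible positive function. Then the family (a_α^{−d})_{α ∈ A →₀ ℕ} is summable. -/
/-!
Superexponentiality gives `a α ≥ ∏ₙ a(eₙ) ^ α n`, so `a α ^ (-d)` is dominated by the monomial
`∏ₙ rₙ ^ α n` with `rₙ = a(eₙ) ^ (-d) < 1`. Summed over all `α`, these monomials form the Euler-type
product `∏ₙ (1 - rₙ)⁻¹ = ∏ₙ (1 + 1 / (a(eₙ) ^ d - 1))`, whose partial products are bounded through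
`1 + x ≤ exp x` by `exp (∑ₙ 1 / (a(eₙ) ^ d - 1))`, finite by `d`-regularity.
-/

open Finset

section Supermultiplicative

variable {M R : Type*} [AddCommMonoid M] [CommSemiring R] [PartialOrder R] [IsOrderedRing R]

theorem pow_le_apply_nsmul_of_supermul {a : M → R} (ha : ∀ x, 0 ≤ a x) (ha0 : a 0 = 1)
    (hsup : ∀ x y, a x * a y ≤ a (x + y)) (x : M) (k : ℕ) : a x ^ k ≤ a (k • x) := by
  induction k with
  | zero => simp [ha0]
  | succ k ih =>
    calc a x ^ (k + 1) = a x ^ k * a x := pow_succ _ _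
      _ ≤ a (k • x) * a x := mul_le_mul_of_nonneg_right ih (ha x)
      _ ≤ a ((k + 1) • x) := by rw [succ_nsmul]; exact hsup _ _

theorem prod_apply_le_apply_sum_of_supermul {ι : Type*} {a : M → R} (ha : ∀ x, 0 ≤ a x)
    (ha0 : a 0 = 1) (hsup : ∀ x y, a x * a y ≤ a (x + y)) (s : Finset ι) (g : ι → M) :
    ∏ i ∈ s, a (g i) ≤ a (∑ i ∈ s, g i) := by
  classical
  induction s using Finset.induction with
  | empty => simp [ha0]
  | insert i s hi ih =>
    rw [prod_insert hi, sum_insert hi]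
    exact (mul_le_mul_of_nonneg_left ih (ha _)).trans (hsup _ _)

theorem Finsupp.prod_pow_le_of_supermul {ι : Type*} {a : (ι →₀ ℕ) → R} (ha : ∀ x, 0 ≤ a x)
    (ha0 : a 0 = 1) (hsup : ∀ x y, a x * a y ≤ a (x + y)) (α : ι →₀ ℕ) :
    (α.prod fun n k => a (single n 1) ^ k) ≤ a α :=
  calc (α.prod fun n k => a (single n 1) ^ k)
      ≤ ∏ n ∈ α.support, a (α n • single n 1) :=
        prod_le_prod (fun _ _ => pow_nonneg (ha _) _)
          fun n _ => pow_le_apply_nsmul_of_supermul ha ha0 hsup _ _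
    _ ≤ a (∑ n ∈ α.support, α n • single n 1) :=
        prod_apply_le_apply_sum_of_supermul ha ha0 hsup _ _
    _ = a α := by simp only [smul_single_one]; rw [← Finsupp.sum, sum_single]

end Supermultiplicative

theorem Finset.sum_finsupp_prod_eq_prod_sum {ι α R : Type*} [Zero α] [CommSemiring R]
    (s : Finset ι) (t : ι → Finset α) (f : ι → α → R) (hf : ∀ i, f i 0 = 1) :
    ∑ g ∈ s.finsupp t, g.prod f = ∏ i ∈ s, ∑ a ∈ t i, f i a := by
  classical
  rw [Finset.finsupp, sum_map, prod_sum]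
  refine sum_congr rfl fun p _ => ?_
  rw [Function.Embedding.coeFn_mk,
    Finsupp.prod_of_support_subset _ (Finsupp.support_indicator_subset s p) _ fun i _ => hf i,
    ← prod_attach]
  exact prod_congr rfl fun i _ => by rw [Finsupp.indicator_of_mem i.2]

theorem Finsupp.sum_Iic_prod_eq_prod_sum {ι R : Type*} [DecidableEq ι] [CommSemiring R]
    (β : ι →₀ ℕ) (f : ι → ℕ → R) (hf : ∀ i, f i 0 = 1) :
    ∑ α ∈ Iic β, α.prod f = ∏ i ∈ β.support, ∑ k ∈ Iic (β i), f i k := by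
  rw [Iic_eq_Icc, bot_eq_zero, Icc_eq, Finset.sum_finsupp_prod_eq_prod_sum _ _ _ hf]
  simp [rangeIcc, Iic_eq_Icc]

theorem Finsupp.summable_prod_pow {ι : Type*} {r : ι → ℝ} (hr0 : ∀ i, 0 ≤ r i)
    (hr1 : ∀ i, r i < 1) (hr : Summable fun i => r i / (1 - r i)) :
    Summable fun α : ι →₀ ℕ => α.prod fun i k => r i ^ k := by
  classical
  have hc0 : ∀ i, 0 ≤ r i / (1 - r i) := fun i => div_nonneg (hr0 i) (sub_pos.2 (hr1 i)).le
  have hgeom : ∀ i (s : Finset ℕ), ∑ k ∈ s, r i ^ k ≤ 1 + r i / (1 - r i) := fun i s => by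
    have h1 : 1 + r i / (1 - r i) = (1 - r i)⁻¹ := by
      field_simp [(sub_pos.2 (hr1 i)).ne']; ring
    rw [h1, ← tsum_geometric_of_lt_one (hr0 i) (hr1 i)]
    exact (summable_geometric_of_lt_one (hr0 i) (hr1 i)).sum_le_tsum s
      fun k _ => pow_nonneg (hr0 i) k
  refine summable_of_sum_le (c := Real.exp (∑' i, r i / (1 - r i)))
    (fun α => prod_nonneg fun i _ => pow_nonneg (hr0 i) _) fun u => ?_
  calc ∑ α ∈ u, α.prod (fun i k => r i ^ k)
      ≤ ∑ α ∈ Iic (u.sup id), α.prod (fun i k => r i ^ k) :=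
        sum_le_sum_of_subset_of_nonneg (fun α hα => mem_Iic.2 (le_sup (f := id) hα))
          fun α _ _ => prod_nonneg fun i _ => pow_nonneg (hr0 i) _
    _ = ∏ i ∈ (u.sup id).support, ∑ k ∈ Iic (u.sup id i), r i ^ k :=
        sum_Iic_prod_eq_prod_sum _ _ fun i => pow_zero _
    _ ≤ ∏ i ∈ (u.sup id).support, (1 + r i / (1 - r i)) :=
        prod_le_prod (fun i _ => Finset.sum_nonneg fun k _ => pow_nonneg (hr0 i) k)
          fun i _ => hgeom i _
    _ ≤ Real.exp (∑ i ∈ (u.sup id).support, r i / (1 - r i)) :=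
        Real.prod_one_add_le_exp_sum _ hc0
    _ ≤ Real.exp (∑' i, r i / (1 - r i)) :=
        Real.exp_le_exp.2 (hr.sum_le_tsum _ fun i _ => hc0 i)

/-- If `a : (A →₀ ℕ) → ℝ` is a superexponential `d`-regular admissible positive
function (with `d ≥ 1`), then the family `(a α ^ d)⁻¹` is summable. -/
theorem summable_of_superexponential_regular_admissible
    {A : Type*} (d : ℕ) (hd : 1 ≤ d) (a : (A →₀ ℕ) → ℝ)
    (hpos : ∀ α, 0 < a α)
    (h0 : a 0 = 1)
    (hgen : ∀ n : A, 1 < a (Finsupp.single n 1))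
    (hreg : Summable fun n : A => 1 / ((a (Finsupp.single n 1)) ^ d - 1))
    (hsup : ∀ α β : A →₀ ℕ, a α * a β ≤ a (α + β)) :
    Summable fun α : A →₀ ℕ => 1 / (a α) ^ d := by
  set b : (A →₀ ℕ) → ℝ := fun α => a α ^ d
  have hb_pos : ∀ α, 0 < b α := fun α => pow_pos (hpos α) d
  have hb_sup : ∀ α β, b α * b β ≤ b (α + β) := fun α β => by
    rw [← mul_pow]; exact pow_le_pow_left₀ (mul_pos (hpos α) (hpos β)).le (hsup α β) d
  have hb_gen : ∀ n, 1 < b (Finsupp.single n 1) := fun n => one_lt_pow₀ (hgen n) (by omega)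
  have hr_reg : Summable fun n => (b (Finsupp.single n 1))⁻¹ / (1 - (b (Finsupp.single n 1))⁻¹) :=
    hreg.congr fun n => by
      have h1 := (hb_pos (Finsupp.single n 1)).ne'
      have h2 := (sub_pos.2 (hb_gen n)).ne'
      simp only [b] at h1 h2 ⊢
      field_simp
  refine (Finsupp.summable_prod_pow (fun n => (inv_pos.2 (hb_pos _)).le)
    (fun n => inv_lt_one_of_one_lt₀ (hb_gen n)) hr_reg).of_nonneg_of_le
    (fun α => (one_div_pos.2 (pow_pos (hpos α) d)).le) fun α => ?_
  calc 1 / a α ^ d = (b α)⁻¹ := one_div _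
    _ ≤ (α.prod fun n k => b (Finsupp.single n 1) ^ k)⁻¹ :=
        inv_anti₀ (prod_pos fun n _ => pow_pos (hb_pos _) _)
          (Finsupp.prod_pow_le_of_supermul (fun α => (hb_pos α).le) (by simp [b, h0]) hb_sup α)
    _ = α.prod fun n k => (b (Finsupp.single n 1))⁻¹ ^ k := by
        simp only [Finsupp.prod, ← prod_inv_distrib, inv_pow]
end

section
/- Let A be an index type, let d ≥ 1 be a natural number, and let a : (A →₀ ℕ) → ℝ be an exponential admissible positive function. If the family (a_α^{−d})_{α ∈ A →₀ ℕ} is summable, then the family (1/(a_{e_n}^d − 1))_{n ∈ A} is summable, i.e. a is d-regular. -/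
/-- If `a : (A →₀ ℕ) → ℝ` is an exponential admissible positive function (with `d ≥ 1`)
and the family `(a α ^ d)⁻¹` is summable, then `a` is `d`-regular, i.e. the family
`1 / (a (e n) ^ d - 1)` over the generators is summable. -/
theorem regular_of_summable_of_exponential_admissible
    {A : Type*} (d : ℕ) (hd : 1 ≤ d) (a : (A →₀ ℕ) → ℝ)
    (hpos : ∀ α, 0 < a α)
    (h0 : a 0 = 1)
    (hgen : ∀ n : A, 1 < a (Finsupp.single n 1))
    (hexp : ∀ α β : A →₀ ℕ, a α * a β = a (α + β))
    (hsum : Summable fun α : A →₀ ℕ => 1 / (a α) ^ d) :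
    Summable fun n : A => 1 / ((a (Finsupp.single n 1)) ^ d - 1) := by
  have hsingle : ∀ (n : A) (k : ℕ),
      a (Finsupp.single n (k + 1)) = a (Finsupp.single n 1) ^ (k + 1) := by
    intro n k
    induction k with
    | zero => simp
    | succ k ih =>
      have h : Finsupp.single n (k + 1 + 1) =
          Finsupp.single n (k + 1) + Finsupp.single n 1 := by
        rw [← Finsupp.single_add]
      rw [h, ← hexp, ih]; ring
  have hinj : Function.Injective (fun p : A × ℕ => Finsupp.single p.1 (p.2 + 1)) := by
    intro p q h
    simp only [Finsupp.single_eq_single_iff] at h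
    rcases h with ⟨h1, h2⟩ | ⟨h, _⟩
    · exact Prod.ext h1 (Nat.succ_injective h2)
    · omega
  have hfsum : Summable fun p : A × ℕ => 1 / (a (Finsupp.single p.1 (p.2 + 1))) ^ d :=
    hsum.comp_injective hinj
  have hnn : ∀ p : A × ℕ, 0 ≤ 1 / (a (Finsupp.single p.1 (p.2 + 1))) ^ d := by
    intro p
    have := hpos (Finsupp.single p.1 (p.2 + 1))
    positivity
  have houter := ((summable_prod_of_nonneg hnn).mp hfsum).2
  refine houter.congr fun n => ?_
  have hx : (1 : ℝ) < a (Finsupp.single n 1) ^ d :=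
    one_lt_pow₀ (hgen n) (by omega)
  set x : ℝ := a (Finsupp.single n 1) ^ d with hxdef
  have hx0 : (0 : ℝ) < x := lt_trans one_pos hx
  have hr : x⁻¹ < 1 := inv_lt_one_of_one_lt₀ hx
  have hr0 : (0 : ℝ) ≤ x⁻¹ := by positivity
  have hterm : ∀ k : ℕ, 1 / (a (Finsupp.single n (k + 1))) ^ d = x⁻¹ ^ (k + 1) := by
    intro k
    rw [hsingle n k, ← pow_mul, mul_comm, pow_mul, one_div, ← inv_pow]
  calc ∑' k : ℕ, 1 / (a (Finsupp.single n (k + 1))) ^ d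
      = ∑' k : ℕ, x⁻¹ * x⁻¹ ^ k := by
        refine tsum_congr fun k => ?_
        rw [hterm k, pow_succ, mul_comm]
    _ = x⁻¹ * (1 - x⁻¹)⁻¹ := by
        rw [tsum_mul_left, tsum_geometric_of_lt_one hr0 hr]
    _ = 1 / (x - 1) := by
        have hx1 : x - 1 ≠ 0 := by linarith
        field_simp
end

section
/- (Zhang) For a natural number d ≥ 1, the family ((2ℕ)^{−dα})_{α ∈ ℕ →₀ ℕ} is summable if and only if d > 1, where (2ℕ)^{α} = ∏_{k ∈ supp(α)} (2(k+1))^{α_k}. -/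
/-!
Writing `q k = (2(k+1))^{-d}`, the family is `α ↦ ∏ₖ q k ^ α k`. Its value at `single k 1` is
`q k`, so summability forces `∑ q k < ∞`, i.e. `d > 1`. Conversely, every finite set of
exponents `α` lies in a box `∏ₖ [0, βₖ]`, over which the sum factors into truncated geometric
series `∑ⱼ q k ^ j ≤ 1 + 2 q k ≤ exp (2 q k)`, so all finite partial sums are bounded by
`exp (2 ∑ₖ q k)`.
-/

/-- The weight `(2ℕ)^α = ∏_{k ∈ supp α} (2(k+1))^(α k)` on the free commutative
monoid `ℕ →₀ ℕ`. -/
noncomputable def twoNpow (α : ℕ →₀ ℕ) : ℝ :=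
  ∏ k ∈ α.support, ((2 * ((k : ℝ) + 1)) ^ (α k))

open Finset

theorem Finset.prod_sum_eq_sum_finsupp {ι α β : Type*} [Zero α] [CommSemiring β]
    (s : Finset ι) (t : ι → Finset α) (g : ι → α → β) :
    ∏ i ∈ s, ∑ a ∈ t i, g i a = ∑ f ∈ s.finsupp t, ∏ i ∈ s, g i (f i) := by
  classical
  rw [prod_sum, Finset.finsupp, sum_map]
  refine sum_congr rfl fun x _ => ?_
  rw [← prod_attach s]
  exact prod_congr rfl fun i _ => by simp [Finsupp.indicator_of_mem i.2]

theorem geom_sum_le_one_add_two_mul {r : ℝ} (h0 : 0 ≤ r) (hr : r ≤ 1 / 2) (n : ℕ) :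
    ∑ j ∈ range n, r ^ j ≤ 1 + 2 * r := by
  have h := geom_sum_Ico_le_of_lt_one (m := 0) (n := n) h0 (by linarith)
  rw [← range_eq_Ico, pow_zero] at h
  refine h.trans ?_
  rw [div_le_iff₀ (by linarith)]
  nlinarith

section FinsuppProdPow

variable {ι : Type*} {q : ι → ℝ}

theorem summable_finsupp_prod_pow (h0 : ∀ i, 0 ≤ q i) (hhalf : ∀ i, q i ≤ 1 / 2)
    (hq : Summable q) : Summable fun f : ι →₀ ℕ => f.prod fun i n => q i ^ n := by
  classical
  refine summable_of_sum_le (c := Real.exp (∑' i, 2 * q i))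
    (fun f => prod_nonneg fun i _ => pow_nonneg (h0 i) _) fun u => ?_
  set β := u.sup id
  have hle : ∀ f ∈ u, f ≤ β := fun f hf => le_sup (f := id) hf
  have hbox : u ⊆ β.support.finsupp fun i => range (β i + 1) := fun f hf =>
    mem_finsupp_iff.2 ⟨Finsupp.support_mono (hle f hf),
      fun i _ => mem_range_succ_iff.2 (hle f hf i)⟩
  calc ∑ f ∈ u, f.prod (fun i n => q i ^ n)
      ≤ ∑ f ∈ β.support.finsupp (fun i => range (β i + 1)), f.prod (fun i n => q i ^ n) :=
        sum_le_sum_of_subset_of_nonneg hbox fun f _ _ =>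
          prod_nonneg fun i _ => pow_nonneg (h0 i) _
    _ = ∏ i ∈ β.support, ∑ j ∈ range (β i + 1), q i ^ j := by
        rw [prod_sum_eq_sum_finsupp]
        refine sum_congr rfl fun f hf => ?_
        exact Finsupp.prod_of_support_subset _ (mem_finsupp_iff.1 hf).1 _ fun i _ => pow_zero _
    _ ≤ ∏ i ∈ β.support, (1 + 2 * q i) :=
        prod_le_prod (fun i _ => sum_nonneg fun j _ => pow_nonneg (h0 i) j)
          fun i _ => geom_sum_le_one_add_two_mul (h0 i) (hhalf i) _
    _ ≤ Real.exp (∑ i ∈ β.support, 2 * q i) :=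
        Real.prod_one_add_le_exp_sum _ fun i => mul_nonneg zero_le_two (h0 i)
    _ ≤ Real.exp (∑' i, 2 * q i) :=
        Real.exp_le_exp.2 <|
          (hq.mul_left 2).sum_le_tsum _ fun i _ => mul_nonneg zero_le_two (h0 i)

theorem summable_finsupp_prod_pow_iff (h0 : ∀ i, 0 ≤ q i) (hhalf : ∀ i, q i ≤ 1 / 2) :
    (Summable fun f : ι →₀ ℕ => f.prod fun i n => q i ^ n) ↔ Summable q := by
  refine ⟨fun h => ?_, summable_finsupp_prod_pow h0 hhalf⟩
  refine (h.comp_injective (Finsupp.single_left_injective one_ne_zero)).congr fun i => ?_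
  simp [Finsupp.prod_single_index]

end FinsuppProdPow

theorem summable_inv_two_mul_succ_pow_iff {d : ℕ} :
    Summable (fun k : ℕ => ((2 * ((k : ℝ) + 1)) ^ d)⁻¹) ↔ 1 < d := by
  simp_rw [mul_pow, mul_inv]
  rw [summable_mul_left_iff (by positivity), ← Real.summable_nat_pow_inv]
  exact_mod_cast summable_nat_add_iff (f := fun n : ℕ => ((n : ℝ) ^ d)⁻¹) 1

theorem inv_two_mul_succ_pow_le_half {d : ℕ} (hd : 1 ≤ d) (k : ℕ) :
    ((2 * ((k : ℝ) + 1)) ^ d)⁻¹ ≤ 1 / 2 := by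
  have hk : (1 : ℝ) ≤ (k : ℝ) + 1 := by simp
  rw [one_div]
  refine inv_anti₀ two_pos ?_
  calc (2 : ℝ) ≤ 2 * ((k : ℝ) + 1) := by linarith
    _ ≤ (2 * ((k : ℝ) + 1)) ^ d := le_self_pow₀ (by linarith) (by omega)

theorem one_div_twoNpow_pow (d : ℕ) (α : ℕ →₀ ℕ) :
    1 / twoNpow α ^ d = α.prod fun k n => ((2 * ((k : ℝ) + 1)) ^ d)⁻¹ ^ n := by
  simp only [twoNpow, Finsupp.prod, one_div, ← prod_pow, ← prod_inv_distrib, ← pow_mul, inv_pow]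
  exact prod_congr rfl fun k _ => by ring

/-- (Zhang) For `d ≥ 1`, the family `((2ℕ)^α)⁻ᵈ` over `α ∈ ℕ →₀ ℕ` is summable
if and only if `d > 1`. -/
theorem zhang_summable_iff (d : ℕ) (hd : 1 ≤ d) :
    (Summable fun α : ℕ →₀ ℕ => 1 / (twoNpow α) ^ d) ↔ 1 < d := by
  simp_rw [one_div_twoNpow_pow]
  rw [summable_finsupp_prod_pow_iff (fun k => by positivity) (inv_two_mul_succ_pow_le_half hd),
    summable_inv_two_mul_succ_pow_iff]
end

section
/- (Våge-type inequality) Let A be an index type and a : (A →₀ ℕ) → ℝ a superexponential positive function. Let p, q ∈ ℕ with p ≥ q and suppose S := ∑_{α ∈ A →₀ ℕ} a_α^{−(p−q)} < ∞. Then for all f, g : (A →₀ ℕ) → ℂ with ‖f‖_q < ∞ and ‖g‖_p < ∞, the convolution f*g satisfies ∑_{γ} |∑_{α+β=γ} f_α g_β|² a_γ^{−p} ≤ S · (∑_{α} |f_α|² a_α^{−q}) · (∑_{β} |g_β|² a_β^{−p}); in particular ‖f*g‖_p ≤ √S · ‖f‖_q · ‖g‖_p. -/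
/-!
For `α + β = γ`, superexponentiality gives `a α ^ q * a β ^ p * a α ^ (p - q) ≤ a γ ^ p`, so
Cauchy–Schwarz on the antidiagonal of `γ`, with weights `a α ^ (-(p - q))`, bounds
`|(f * g) γ|² a γ ^ (-p)` by `S * ∑_{α + β = γ} |f α|² a α ^ (-q) |g β|² a β ^ (-p)`.
Summing over `γ` turns the right-hand side into the Cauchy product of `‖f‖_q²` and `‖g‖_p²`.
-/

open scoped ENNReal

/-- The convolution (Cauchy product) of two families indexed by the free commutative
monoid `A →₀ ℕ`, i.e. multiplication in `MvPowerSeries A ℂ`. -/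
noncomputable def conv {A : Type*} [DecidableEq A] (f g : (A →₀ ℕ) → ℂ) : (A →₀ ℕ) → ℂ :=
  fun γ => ∑ x ∈ Finset.HasAntidiagonal.antidiagonal γ, f x.1 * g x.2

/-- The squared weighted `ℓ²`-norm `‖f‖_p² = ∑' α, |f α|² a α ^ (-p)`, as a sum in `[0,∞]`. -/
noncomputable def wsum {A : Type*} (a : (A →₀ ℕ) → ℝ) (p : ℕ) (f : (A →₀ ℕ) → ℂ) : ℝ≥0∞ :=
  ∑' α, ENNReal.ofReal (‖f α‖ ^ 2 / (a α) ^ p)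

open Finset HasAntidiagonal

theorem ENNReal.tsum_mul_tsum_eq_tsum_sum_antidiagonal {M : Type*} [AddCommMonoid M]
    [HasAntidiagonal M] (f g : M → ℝ≥0∞) :
    (∑' n, f n) * ∑' n, g n = ∑' n, ∑ kl ∈ antidiagonal n, f kl.1 * g kl.2 := by
  calc (∑' n, f n) * ∑' n, g n = ∑' kl : M × M, f kl.1 * g kl.2 := by
        rw [ENNReal.tsum_prod', ← ENNReal.tsum_mul_right]
        simp_rw [ENNReal.tsum_mul_left]
    _ = ∑' x : Σ n : M, antidiagonal n, f (x.2 : M × M).1 * g (x.2 : M × M).2 :=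
        (sigmaAntidiagonalEquivProd.tsum_eq (fun kl : M × M => f kl.1 * g kl.2)).symm
    _ = ∑' n, ∑ kl ∈ antidiagonal n, f kl.1 * g kl.2 := by
        rw [ENNReal.tsum_sigma']
        refine tsum_congr fun n => ?_
        rw [tsum_fintype, sum_coe_sort (antidiagonal n) (fun kl => f kl.1 * g kl.2)]

theorem sum_antidiagonal_fst_le_tsum {M : Type*} [AddCommMonoid M] [IsLeftCancelAdd M]
    [HasAntidiagonal M] {φ : M → ℝ} (hφ : ∀ m, 0 ≤ φ m) (hs : Summable φ) (n : M) :
    ∑ kl ∈ antidiagonal n, φ kl.1 ≤ ∑' m, φ m := by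
  classical
  have hfst : Set.InjOn Prod.fst (antidiagonal n : Set (M × M)) := fun x hx y hy h =>
    Prod.ext h <| add_left_cancel (a := x.1) <| by
      rw [mem_antidiagonal.mp hx, h, mem_antidiagonal.mp hy]
  rw [← sum_image hfst]
  exact hs.sum_le_tsum _ fun m _ => hφ m

section Convolution

variable {A : Type*} [DecidableEq A]

theorem norm_conv_sq_div_pow_le {a : (A →₀ ℕ) → ℝ} (hpos : ∀ α, 0 < a α)
    (hsup : ∀ α β, a α * a β ≤ a (α + β)) {p q : ℕ} (hpq : q ≤ p)
    (hS : Summable fun α => 1 / a α ^ (p - q)) (f g : (A →₀ ℕ) → ℂ) (γ : A →₀ ℕ) :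
    ‖conv f g γ‖ ^ 2 / a γ ^ p ≤ (∑' α, 1 / a α ^ (p - q)) *
      ∑ x ∈ antidiagonal γ, ‖f x.1‖ ^ 2 / a x.1 ^ q * (‖g x.2‖ ^ 2 / a x.2 ^ p) := by
  have hweighted : ∀ x ∈ antidiagonal γ, (‖f x.1‖ * ‖g x.2‖) ^ 2 ≤ 1 / a x.1 ^ (p - q) *
      (a γ ^ p * (‖f x.1‖ ^ 2 / a x.1 ^ q * (‖g x.2‖ ^ 2 / a x.2 ^ p))) := by
    intro x hx
    have h₁ := hpos x.1
    have h₂ := hpos x.2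
    have hweight : a x.1 ^ (p - q) * a x.1 ^ q * a x.2 ^ p = (a x.1 * a x.2) ^ p := by
      rw [← pow_add, Nat.sub_add_cancel hpq, mul_pow]
    have hγ : (a x.1 * a x.2) ^ p ≤ a γ ^ p :=
      pow_le_pow_left₀ (by positivity) (mem_antidiagonal.mp hx ▸ hsup x.1 x.2) p
    calc (‖f x.1‖ * ‖g x.2‖) ^ 2 ≤ (‖f x.1‖ * ‖g x.2‖) ^ 2 * a γ ^ p / (a x.1 * a x.2) ^ p := by
          rw [le_div_iff₀ (by positivity)]
          exact mul_le_mul_of_nonneg_left hγ (sq_nonneg _)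
      _ = _ := by
          rw [← hweight]
          field_simp
  have hγ := hpos γ
  rw [div_le_iff₀ (by positivity)]
  calc ‖conv f g γ‖ ^ 2 ≤ (∑ x ∈ antidiagonal γ, ‖f x.1‖ * ‖g x.2‖) ^ 2 := by
        gcongr
        exact (norm_sum_le _ _).trans_eq (sum_congr rfl fun x _ => norm_mul _ _)
    _ ≤ (∑ x ∈ antidiagonal γ, 1 / a x.1 ^ (p - q)) * ∑ x ∈ antidiagonal γ,
          a γ ^ p * (‖f x.1‖ ^ 2 / a x.1 ^ q * (‖g x.2‖ ^ 2 / a x.2 ^ p)) :=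
        sum_sq_le_sum_mul_sum_of_sq_le_mul _ (fun x _ => by have := hpos x.1; positivity)
          (fun x _ => by have := hpos x.1; have := hpos x.2; positivity) hweighted
    _ ≤ (∑' α, 1 / a α ^ (p - q)) * ∑ x ∈ antidiagonal γ,
          a γ ^ p * (‖f x.1‖ ^ 2 / a x.1 ^ q * (‖g x.2‖ ^ 2 / a x.2 ^ p)) := by
        gcongr
        · exact sum_nonneg fun x _ => by have := hpos x.1; have := hpos x.2; positivity
        · exact sum_antidiagonal_fst_le_tsum (fun α => by have := hpos α; positivity) hS γ
    _ = _ := by rw [← mul_sum]; ring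

theorem wsum_conv_le {a : (A →₀ ℕ) → ℝ} (hpos : ∀ α, 0 < a α)
    (hsup : ∀ α β, a α * a β ≤ a (α + β)) {p q : ℕ} (hpq : q ≤ p)
    (hS : Summable fun α => 1 / a α ^ (p - q)) (f g : (A →₀ ℕ) → ℂ) :
    wsum a p (conv f g) ≤
      ENNReal.ofReal (∑' α, 1 / a α ^ (p - q)) * wsum a q f * wsum a p g := by
  have hT : 0 ≤ ∑' α, 1 / a α ^ (p - q) := tsum_nonneg fun α => by have := hpos α; positivity
  have hnonneg (k : ℕ) (h : (A →₀ ℕ) → ℂ) (α) : 0 ≤ ‖h α‖ ^ 2 / a α ^ k := by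
    have := hpos α; positivity
  calc wsum a p (conv f g)
      ≤ ∑' γ, ENNReal.ofReal (∑' α, 1 / a α ^ (p - q)) * ∑ x ∈ antidiagonal γ,
          ENNReal.ofReal (‖f x.1‖ ^ 2 / a x.1 ^ q) * ENNReal.ofReal (‖g x.2‖ ^ 2 / a x.2 ^ p) := by
        refine ENNReal.tsum_le_tsum fun γ => (ENNReal.ofReal_le_ofReal
          (norm_conv_sq_div_pow_le hpos hsup hpq hS f g γ)).trans_eq ?_
        rw [ENNReal.ofReal_mul hT, ENNReal.ofReal_sum_of_nonneg
          fun x _ => mul_nonneg (hnonneg q f x.1) (hnonneg p g x.2)]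
        simp_rw [ENNReal.ofReal_mul (hnonneg q f _)]
    _ = _ := by
        rw [ENNReal.tsum_mul_left, mul_assoc, wsum, wsum,
          ENNReal.tsum_mul_tsum_eq_tsum_sum_antidiagonal]

end Convolution

theorem vage_inequality_general {A : Type*} [DecidableEq A] (a : (A →₀ ℕ) → ℝ)
    (hpos : ∀ α, 0 < a α)
    (hsup : ∀ α β : A →₀ ℕ, a α * a β ≤ a (α + β))
    (p q : ℕ) (hpq : q ≤ p)
    (hS : Summable fun α : A →₀ ℕ => 1 / (a α) ^ (p - q))
    (f g : (A →₀ ℕ) → ℂ) :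
    wsum a p (conv f g)
      ≤ ENNReal.ofReal (∑' α : A →₀ ℕ, 1 / (a α) ^ (p - q)) * wsum a q f * wsum a p g ∧
    (wsum a p (conv f g)) ^ (2⁻¹ : ℝ)
      ≤ ENNReal.ofReal (Real.sqrt (∑' α : A →₀ ℕ, 1 / (a α) ^ (p - q)))
          * (wsum a q f) ^ (2⁻¹ : ℝ) * (wsum a p g) ^ (2⁻¹ : ℝ) := by
  have hconv := wsum_conv_le hpos hsup hpq hS f g
  refine ⟨hconv, ?_⟩
  have hT : 0 ≤ ∑' α, 1 / a α ^ (p - q) := tsum_nonneg fun α => by have := hpos α; positivity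
  have hhalf : (0 : ℝ) ≤ 2⁻¹ := by norm_num
  rw [Real.sqrt_eq_rpow, one_div, ← ENNReal.ofReal_rpow_of_nonneg hT hhalf,
    ← ENNReal.mul_rpow_of_nonneg _ _ hhalf, ← ENNReal.mul_rpow_of_nonneg _ _ hhalf]
  exact ENNReal.rpow_le_rpow hconv hhalf

/-- (Våge-type inequality) If `a` is superexponential and positive, `p ≥ q`, and
`S = ∑_α a α ^ (-(p-q)) < ∞`, then `‖f * g‖_p² ≤ S ⬝ ‖f‖_q² ⬝ ‖g‖_p²`, and in
particular `‖f * g‖_p ≤ √S ⬝ ‖f‖_q ⬝ ‖g‖_p`. -/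
theorem vage_inequality {A : Type*} [DecidableEq A] (a : (A →₀ ℕ) → ℝ)
    (hpos : ∀ α, 0 < a α)
    (hsup : ∀ α β : A →₀ ℕ, a α * a β ≤ a (α + β))
    (p q : ℕ) (hpq : q ≤ p)
    (hS : Summable fun α : A →₀ ℕ => 1 / (a α) ^ (p - q))
    (f g : (A →₀ ℕ) → ℂ)
    (hf : wsum a q f < ⊤) (hg : wsum a p g < ⊤) :
    wsum a p (conv f g)
      ≤ ENNReal.ofReal (∑' α : A →₀ ℕ, 1 / (a α) ^ (p - q)) * wsum a q f * wsum a p g ∧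
    (wsum a p (conv f g)) ^ (2⁻¹ : ℝ)
      ≤ ENNReal.ofReal (Real.sqrt (∑' α : A →₀ ℕ, 1 / (a α) ^ (p - q)))
          * (wsum a q f) ^ (2⁻¹ : ℝ) * (wsum a p g) ^ (2⁻¹ : ℝ) :=
  vage_inequality_general a hpos hsup p q hpq hS f g
end

section
/- (The Schwartz space of tempered distributions is not a Våge space) There do not exist a natural number d ≥ 1 and a function B : ℕ → ℝ with B(k) > 0 for all k, such that for all p, q ∈ ℕ with p ≥ q + d and all sequences f, g : ℕ → ℂ with ∑_m |f_m|² (m+1)^{−2q} < ∞ and ∑_n |g_n|² (n+1)^{−2p} < ∞ one has ∑_n |∑_{m=0}^{n} f_m g_{n−m}|² (n+1)^{−2p} ≤ B(p−q)² · (∑_m |f_m|² (m+1)^{−2q}) · (∑_n |g_n|² (n+1)^{−2p}). -/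
open scoped ENNReal

/-!
Test the estimate on point masses: for `f = g = δ_N` one has `‖δ_N‖_q² = (N+1)^{-2q}` while
`δ_N * δ_N = δ_{2N}` has `‖δ_{2N}‖_p² = (2N+1)^{-2p} ≥ 4^{-p} (N+1)^{-2p}`. The estimate would then
force `(N+1)^{2q} ≤ 4^p B(p-q)²` for every `N`, which fails as soon as `q ≥ 1`.
-/

noncomputable def weightedNormSq {E : Type*} [SeminormedAddGroup E] (p : ℕ) (f : ℕ → E) : ℝ≥0∞ :=
  ∑' n : ℕ, ENNReal.ofReal (‖f n‖ ^ 2 / ((n : ℝ) + 1) ^ (2 * p))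

def cauchyProduct {R : Type*} [Semiring R] (f g : ℕ → R) (n : ℕ) : R :=
  ∑ m ∈ Finset.range (n + 1), f m * g (n - m)

theorem weightedNormSq_single {E : Type*} [SeminormedAddGroup E] (p N : ℕ) (c : E) :
    weightedNormSq p (Pi.single N c) = ENNReal.ofReal (‖c‖ ^ 2 / ((N : ℝ) + 1) ^ (2 * p)) := by
  rw [weightedNormSq, tsum_eq_single N fun n hn => by simp [hn]]
  simp

theorem cauchyProduct_single_single {R : Type*} [Semiring R] (M N : ℕ) (a b : R) :
    cauchyProduct (Pi.single M a) (Pi.single N b) = Pi.single (M + N) (a * b) := by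
  ext n
  rw [cauchyProduct]
  by_cases hn : n = M + N
  · subst hn
    rw [Finset.sum_eq_single_of_mem M (by simp) fun m _ hm => by simp [hm]]
    simp
  · rw [Pi.single_eq_of_ne hn]
    refine Finset.sum_eq_zero fun m hm => ?_
    by_cases hm' : m = M
    · have : n - m ≠ N := by rw [Finset.mem_range] at hm; omega
      simp [this]
    · simp [hm']

theorem two_mul_add_one_pow_le (N p : ℕ) :
    (2 * (N : ℝ) + 1) ^ (2 * p) ≤ 4 ^ p * ((N : ℝ) + 1) ^ (2 * p) :=
  calc (2 * (N : ℝ) + 1) ^ (2 * p) ≤ (2 * ((N : ℝ) + 1)) ^ (2 * p) := by gcongr; linarith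
    _ = 4 ^ p * ((N : ℝ) + 1) ^ (2 * p) := by rw [mul_pow, pow_mul]; norm_num

theorem add_one_pow_le_of_weightedNormSq_cauchyProduct_single_le {p q N : ℕ} {C : ℝ} (hC : 0 ≤ C)
    (h : weightedNormSq p (cauchyProduct (Pi.single N (1 : ℂ)) (Pi.single N 1))
      ≤ ENNReal.ofReal C * weightedNormSq q (Pi.single N (1 : ℂ))
        * weightedNormSq p (Pi.single N (1 : ℂ))) :
    ((N : ℝ) + 1) ^ (2 * q) ≤ 4 ^ p * C := by
  simp only [cauchyProduct_single_single, weightedNormSq_single, norm_one, mul_one, one_pow] at h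
  rw [← ENNReal.ofReal_mul hC, ← ENNReal.ofReal_mul (by positivity),
    ENNReal.ofReal_le_ofReal_iff (by positivity)] at h
  push_cast at h
  rw [← two_mul, mul_one_div, mul_one_div, div_div,
    div_le_div_iff₀ (by positivity) (by positivity), one_mul] at h
  refine le_of_mul_le_mul_right ?_ (by positivity : (0 : ℝ) < ((N : ℝ) + 1) ^ (2 * p))
  calc ((N : ℝ) + 1) ^ (2 * q) * ((N : ℝ) + 1) ^ (2 * p) ≤ C * (2 * (N : ℝ) + 1) ^ (2 * p) := h
    _ ≤ C * (4 ^ p * ((N : ℝ) + 1) ^ (2 * p)) := by gcongr; exact two_mul_add_one_pow_le N p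
    _ = 4 ^ p * C * ((N : ℝ) + 1) ^ (2 * p) := by ring

/-- (The Schwartz space of tempered distributions is not a Våge space.)
There are no `d ≥ 1` and positive constants `B k` such that
`‖f * g‖_p ≤ B (p - q) ⬝ ‖f‖_q ⬝ ‖g‖_p` (in squared form) holds for the weights
`a n = (n+1)²` whenever `p ≥ q + d`. -/
theorem schwartz_not_vage :
    ¬ ∃ (d : ℕ), 1 ≤ d ∧ ∃ B : ℕ → ℝ, (∀ k, 0 < B k) ∧
      ∀ p q : ℕ, q + d ≤ p → ∀ f g : ℕ → ℂ,
        (∑' m : ℕ, ENNReal.ofReal (‖f m‖ ^ 2 / ((m : ℝ) + 1) ^ (2 * q))) < ⊤ →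
        (∑' n : ℕ, ENNReal.ofReal (‖g n‖ ^ 2 / ((n : ℝ) + 1) ^ (2 * p))) < ⊤ →
        (∑' n : ℕ, ENNReal.ofReal
            (‖∑ m ∈ Finset.range (n + 1), f m * g (n - m)‖ ^ 2 / ((n : ℝ) + 1) ^ (2 * p)))
          ≤ ENNReal.ofReal ((B (p - q)) ^ 2)
              * (∑' m : ℕ, ENNReal.ofReal (‖f m‖ ^ 2 / ((m : ℝ) + 1) ^ (2 * q)))
              * (∑' n : ℕ, ENNReal.ofReal (‖g n‖ ^ 2 / ((n : ℝ) + 1) ^ (2 * p))) := by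
  rintro ⟨d, -, B, -, hvage⟩
  have hbound (N : ℕ) : ((N : ℝ) + 1) ^ 2 ≤ 4 ^ (d + 1) * B d ^ 2 := by
    have hfin (r : ℕ) : weightedNormSq r (Pi.single N (1 : ℂ)) < ⊤ := by
      rw [weightedNormSq_single]; exact ENNReal.ofReal_lt_top
    have h := hvage (d + 1) 1 (by omega) (Pi.single N 1) (Pi.single N 1) (hfin 1) (hfin _)
    rw [Nat.add_sub_cancel] at h
    exact add_one_pow_le_of_weightedNormSq_cauchyProduct_single_le (sq_nonneg _) h
  obtain ⟨N, hN⟩ := exists_nat_gt (4 ^ (d + 1) * B d ^ 2)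
  nlinarith [hbound N]
end

section
/- Let A be an index type and a : (A →₀ ℕ) → ℝ a superexponential admissible positive function. Let f : (A →₀ ℕ) → ℂ with f_0 = 0 and ∑_α |f_α|² a_α^{−p} < ∞ for some p ∈ ℕ. Then ‖f‖_q² = ∑_α |f_α|² a_α^{−q} tends to 0 as q → ∞; in particular, for every M > 0 there exists q ∈ ℕ with ‖f‖_q < M. -/
/-!
A superexponential weight that exceeds `1` on the generators `e_n` exceeds `1` at every
`α ≠ 0`, since `α` is a nonempty sum of generators. Hence for `f 0 = 0` every term
`|f α|² a_α^{-q}` decreases to `0` as `q → ∞`, and dominated convergence for sums in `[0,∞]`,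
with the finite sum `‖f‖_p²` as dominating series, gives `‖f‖_q² → 0`.
-/

open scoped ENNReal

open Filter Topology

theorem one_lt_apply_of_mem_closure {M : Type*} [AddMonoid M] {a : M → ℝ} {s : Set M}
    (hs : ∀ x ∈ s, 1 < a x) (hsup : ∀ x y, a x * a y ≤ a (x + y))
    {x : M} (hx : x ∈ AddSubmonoid.closure s) (hx0 : x ≠ 0) : 1 < a x := by
  suffices ∀ x ∈ AddSubmonoid.closure s, x = 0 ∨ 1 < a x from (this x hx).resolve_left hx0
  intro x hx
  induction hx using AddSubmonoid.closure_induction with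
  | mem x hx => exact .inr (hs x hx)
  | zero => exact .inl rfl
  | add x y _ _ hx hy =>
    rcases hx with rfl | hx
    · simpa only [zero_add] using hy
    rcases hy with rfl | hy
    · simpa only [add_zero] using Or.inr hx
    exact .inr ((one_lt_mul_of_lt_of_le hx hy.le).trans_le (hsup x y))

theorem Finsupp.mem_closure_range_single_one {A : Type*} (α : A →₀ ℕ) :
    α ∈ AddSubmonoid.closure (Set.range fun n => Finsupp.single n 1) := by
  induction α using Finsupp.induction with
  | zero => exact zero_mem _
  | single_add n b _ _ _ ih =>
    refine add_mem ?_ ih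
    rw [← Finsupp.smul_single_one]
    exact nsmul_mem (AddSubmonoid.subset_closure (Set.mem_range_self n)) b

theorem ENNReal.tendsto_tsum_of_dominated_convergence {ι β : Type*} {l : Filter ι}
    [l.IsCountablyGenerated] {F : ι → β → ℝ≥0∞} {f bound : β → ℝ≥0∞}
    (h_bound : ∀ᶠ n in l, ∀ b, F n b ≤ bound b) (h_fin : ∑' b, bound b ≠ ∞)
    (h_lim : ∀ b, Tendsto (F · b) l (𝓝 (f b))) :
    Tendsto (fun n => ∑' b, F n b) l (𝓝 (∑' b, f b)) := by
  let _ : MeasurableSpace β := ⊤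
  have : MeasurableSingletonClass β := ⟨fun _ => trivial⟩
  simpa only [MeasureTheory.lintegral_count] using
    MeasureTheory.tendsto_lintegral_filter_of_dominated_convergence (μ := .count) bound
      (.of_forall fun _ => measurable_from_top) (h_bound.mono fun _ h => .of_forall h)
      (by rwa [MeasureTheory.lintegral_count]) (.of_forall h_lim)

theorem tendsto_tsum_ofReal_div_pow_atTop_zero {ι : Type*} {c w : ι → ℝ} (hc : ∀ i, 0 ≤ c i)
    (hw : ∀ i, c i ≠ 0 → 1 < w i) {p : ℕ} (hp : ∑' i, ENNReal.ofReal (c i / w i ^ p) ≠ ∞) :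
    Tendsto (fun q : ℕ => ∑' i, ENNReal.ofReal (c i / w i ^ q)) atTop (𝓝 0) := by
  rw [← tendsto_add_atTop_iff_nat p, ← tsum_zero]
  refine ENNReal.tendsto_tsum_of_dominated_convergence (.of_forall fun q i => ?_) hp fun i => ?_
  all_goals rcases eq_or_ne (c i) 0 with hci | hci
  · simp [hci]
  · have hwi := hw i hci
    gcongr
    exacts [hc i, hwi.le, Nat.le_add_left p q]
  · simp [hci]
  · have hwi := hw i hci
    have hpow : Tendsto (fun q : ℕ => c i * (w i)⁻¹ ^ (q + p)) atTop (𝓝 (c i * 0)) :=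
      ((tendsto_pow_atTop_nhds_zero_of_lt_one (by positivity) (inv_lt_one_of_one_lt₀ hwi)).comp
        (tendsto_add_atTop_nat p)).const_mul _
    simpa [div_eq_mul_inv] using ENNReal.tendsto_ofReal hpow

theorem wsum_tendsto_zero_of_expectation_zero_general
    {A : Type*} (a : (A →₀ ℕ) → ℝ)
    (hgen : ∀ n : A, 1 < a (Finsupp.single n 1))
    (hsup : ∀ α β : A →₀ ℕ, a α * a β ≤ a (α + β))
    (f : (A →₀ ℕ) → ℂ) (hf0 : f 0 = 0)
    (p : ℕ) (hf : wsum a p f < ⊤) :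
    Filter.Tendsto (fun q : ℕ => wsum a q f) Filter.atTop (nhds 0) ∧
    ∀ M : ℝ, 0 < M → ∃ q : ℕ, (wsum a q f) ^ (2⁻¹ : ℝ) < ENNReal.ofReal M := by
  have hgt (α : A →₀ ℕ) (hα : ‖f α‖ ^ 2 ≠ 0) : 1 < a α :=
    one_lt_apply_of_mem_closure (by rintro _ ⟨n, rfl⟩; exact hgen n) hsup
      (Finsupp.mem_closure_range_single_one α) (by rintro rfl; simp [hf0] at hα)
  have key : Tendsto (fun q : ℕ => wsum a q f) atTop (𝓝 0) :=
    tendsto_tsum_ofReal_div_pow_atTop_zero (fun _ => sq_nonneg _) hgt hf.ne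
  refine ⟨key, fun M hM => ?_⟩
  have hroot := key.ennrpow_const 2⁻¹
  rw [ENNReal.zero_rpow_of_pos (by norm_num)] at hroot
  exact (hroot.eventually_lt_const (ENNReal.ofReal_pos.2 hM)).exists

/-- If `a` is a superexponential admissible positive function and `f` has vanishing
generalized expectation `f 0 = 0` and finite `‖f‖_p` for some `p`, then `‖f‖_q² → 0`
as `q → ∞`; in particular, for every `M > 0` there is `q` with `‖f‖_q < M`. -/
theorem wsum_tendsto_zero_of_expectation_zero
    {A : Type*} (a : (A →₀ ℕ) → ℝ)
    (hpos : ∀ α, 0 < a α)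
    (h0 : a 0 = 1)
    (hgen : ∀ n : A, 1 < a (Finsupp.single n 1))
    (hsup : ∀ α β : A →₀ ℕ, a α * a β ≤ a (α + β))
    (f : (A →₀ ℕ) → ℂ) (hf0 : f 0 = 0)
    (p : ℕ) (hf : wsum a p f < ⊤) :
    Filter.Tendsto (fun q : ℕ => wsum a q f) Filter.atTop (nhds 0) ∧
    ∀ M : ℝ, 0 < M → ∃ q : ℕ, (wsum a q f) ^ (2⁻¹ : ℝ) < ENNReal.ofReal M :=
  wsum_tendsto_zero_of_expectation_zero_general a hgen hsup f hf0 p hf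
end

section
/- Let A be an index type, d ≥ 1 a natural number, and a : (A →₀ ℕ) → ℝ a superexponential d-regular admissible positive function. Let f : (A →₀ ℕ) → ℂ with ‖f‖_p < ∞ for some p ∈ ℕ. Then there exists g : (A →₀ ℕ) → ℂ with ‖g‖_r < ∞ for some r ∈ ℕ and f * g = 1 (the indicator of α = 0) if and only if f_0 ≠ 0. -/
/-!
Writing `f = f₀ (δ - h)` with `h` supported away from `0`, the formal inverse `g = f⁻¹` obeys
`|g| ≤ |f₀|⁻¹ δ + m ⋆ |g|` for `m = |h|` (coefficientwise). The reciprocal weight `c = 1/a` is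
submultiplicative, so `u ↦ ∑ u c^r` is submultiplicative for `⋆`. Applied to the truncations of
`|g|` to the finite sets `{α ≤ γ}`, whose norms are finite, the inequality gives
`∑ |g| c^r ≤ |f₀|⁻¹ / (1 - ∑ m c^r)` once `∑ m c^r < 1`. Such an `r` exists: `∑ m c^(p+d) < ∞` because `‖f‖_p < ∞` and
`∑ c^d ≤ ∏ₙ (1 - a_{eₙ}^{-d})⁻¹ ≤ exp ∑ₙ 1/(a_{eₙ}^d - 1)`, and `c < 1` away from `0` lets the sum
decrease to `0` as `r → ∞`. Finally `‖g‖_{2r}² ≤ (∑ |g| c^r)²`.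
-/

open scoped ENNReal

/-- The multiplicative unit: the indicator of `α = 0`. -/
noncomputable def convOne {A : Type*} [DecidableEq A] : (A →₀ ℕ) → ℂ :=
  fun γ => if γ = 0 then 1 else 0

open Finset Finset.HasAntidiagonal Filter Topology

theorem ENNReal.tsum_sum_antidiagonal {M : Type*} [AddCommMonoid M] [HasAntidiagonal M]
    (F : M × M → ℝ≥0∞) : ∑' γ, ∑ x ∈ antidiagonal γ, F x = ∑' x, F x := by
  rw [← (sigmaAntidiagonalEquivProd (A := M)).tsum_eq, ENNReal.tsum_sigma']
  exact tsum_congr fun γ => (Finset.tsum_subtype _ _).symm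

theorem ENNReal.le_div_of_le_add_mul {x K m : ℝ≥0∞} (hx : x ≠ ⊤) (hm : m < 1)
    (h : x ≤ K + m * x) : x ≤ K / (1 - m) := by
  rw [ENNReal.le_div_iff_mul_le (Or.inl (tsub_pos_of_lt hm).ne') (Or.inl (by simp)),
    ENNReal.mul_sub (fun _ _ => hx), mul_one, mul_comm]
  exact tsub_le_iff_left.mpr (h.trans_eq (add_comm _ _))

theorem ENNReal.tsum_sq_le_sq_tsum {ι : Type*} (u : ι → ℝ≥0∞) :
    ∑' i, u i ^ 2 ≤ (∑' i, u i) ^ 2 := by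
  rw [sq, ← ENNReal.tsum_mul_right]
  exact ENNReal.tsum_le_tsum fun i => by rw [sq]; exact mul_le_mul_right (ENNReal.le_tsum i) _

theorem ENNReal.mul_le_sq_add_sq (x y : ℝ≥0∞) : x * y ≤ x ^ 2 + y ^ 2 := by
  rcases le_total x y with h | h
  · exact ((mul_le_mul_left h y).trans_eq (sq y).symm).trans le_add_self
  · exact ((mul_le_mul_right h x).trans_eq (sq x).symm).trans le_self_add

theorem ENNReal.tsum_mul_pow_add_le {ι : Type*} {c : ι → ℝ≥0∞} (hc : ∀ i, c i ≤ 1)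
    (u : ι → ℝ≥0∞) (p d : ℕ) :
    ∑' i, u i * c i ^ (p + d) ≤ ∑' i, u i ^ 2 * c i ^ p + ∑' i, c i ^ d := by
  rw [← ENNReal.tsum_add]
  refine ENNReal.tsum_le_tsum fun i => ?_
  calc u i * c i ^ (p + d) = u i * c i ^ p * c i ^ d := by rw [pow_add, mul_assoc]
    _ ≤ (u i * c i ^ p) ^ 2 + (c i ^ d) ^ 2 := ENNReal.mul_le_sq_add_sq _ _
    _ ≤ u i ^ 2 * c i ^ p + c i ^ d := by
        rw [mul_pow, ← pow_mul, ← pow_mul]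
        exact add_le_add (mul_le_mul_right (pow_le_pow_right_of_le_one' (hc i) (by omega)) _)
          (pow_le_pow_right_of_le_one' (hc i) (by omega))

theorem ENNReal.exists_tsum_mul_pow_lt {ι : Type*} {u c : ι → ℝ≥0∞} {r₀ : ℕ}
    (hfin : ∑' i, u i * c i ^ r₀ ≠ ⊤) (hc : ∀ i, u i ≠ 0 → c i < 1) {ε : ℝ≥0∞} (hε : 0 < ε) :
    ∃ r, ∑' i, u i * c i ^ r < ε := by
  let _ : MeasurableSpace ι := ⊤
  have hanti : Antitone fun k i => u i * c i ^ (r₀ + k) := by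
    intro k l hkl i
    by_cases hi : u i = 0
    · simp [hi]
    · exact mul_le_mul_right (pow_le_pow_right_of_le_one' (hc i hi).le (by omega)) _
  have hlim : ∀ i, ⨅ k, u i * c i ^ (r₀ + k) = 0 := by
    intro i
    by_cases hi : u i = 0
    · simp [hi]
    have hpow : Tendsto (fun k => u i * c i ^ (r₀ + k)) atTop (𝓝 0) := by
      simp_rw [pow_add, ← mul_assoc]
      simpa using ENNReal.Tendsto.const_mul
        (ENNReal.tendsto_pow_atTop_nhds_zero_of_lt_one (hc i hi))
        (Or.inr (ENNReal.ne_top_of_tsum_ne_top hfin i))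
    exact le_antisymm (ge_of_tendsto' hpow fun k => iInf_le _ k) zero_le
  have := MeasureTheory.lintegral_iInf (μ := MeasureTheory.Measure.count)
    (fun _ => measurable_from_top) hanti (by simpa [MeasureTheory.lintegral_count] using hfin)
  simp only [MeasureTheory.lintegral_count, hlim, tsum_zero] at this
  obtain ⟨k, hk⟩ := iInf_lt_iff.mp (this ▸ hε)
  exact ⟨r₀ + k, hk⟩

section WeightedL1

variable {M : Type*} [AddCommMonoid M] [HasAntidiagonal M]

noncomputable def weightedL1 (w u : M → ℝ≥0∞) : ℝ≥0∞ := ∑' α, u α * w α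

noncomputable def econv (u v : M → ℝ≥0∞) : M → ℝ≥0∞ :=
  fun γ => ∑ x ∈ antidiagonal γ, u x.1 * v x.2

theorem weightedL1_econv_le {w : M → ℝ≥0∞} (hw : ∀ α β, w (α + β) ≤ w α * w β)
    (u v : M → ℝ≥0∞) : weightedL1 w (econv u v) ≤ weightedL1 w u * weightedL1 w v := by
  calc weightedL1 w (econv u v)
      = ∑' γ, ∑ x ∈ antidiagonal γ, u x.1 * v x.2 * w γ := by
        simp only [weightedL1, econv, Finset.sum_mul]
    _ ≤ ∑' γ, ∑ x ∈ antidiagonal γ, u x.1 * w x.1 * (v x.2 * w x.2) := by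
        refine ENNReal.tsum_le_tsum fun γ => Finset.sum_le_sum fun x hx => ?_
        rw [mul_mul_mul_comm, ← mem_antidiagonal.mp hx]
        exact mul_le_mul_right (hw _ _) _
    _ = weightedL1 w u * weightedL1 w v := by
        rw [ENNReal.tsum_sum_antidiagonal, ENNReal.tsum_prod', weightedL1, weightedL1,
          ← ENNReal.tsum_mul_right]
        simp_rw [ENNReal.tsum_mul_left]

variable [DecidableEq M]

theorem weightedL1_le_div_of_le_econv {w u m : M → ℝ≥0∞} {K : ℝ≥0∞}
    (hw : ∀ α β, w (α + β) ≤ w α * w β) (hw0 : w 0 ≤ 1) (hu_top : weightedL1 w u ≠ ⊤)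
    (hm : weightedL1 w m < 1) (hu : ∀ γ, u γ ≤ (if γ = 0 then K else 0) + econv m u γ) :
    weightedL1 w u ≤ K / (1 - weightedL1 w m) := by
  refine ENNReal.le_div_of_le_add_mul hu_top hm ?_
  calc weightedL1 w u
      ≤ ∑' γ, ((if γ = 0 then K else 0) * w γ + econv m u γ * w γ) :=
        ENNReal.tsum_le_tsum fun γ => by rw [← add_mul]; exact mul_le_mul_left (hu γ) _
    _ = K * w 0 + weightedL1 w (econv m u) := by
        rw [ENNReal.tsum_add, weightedL1]
        simp [ite_mul]
    _ ≤ K + weightedL1 w m * weightedL1 w u :=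
        add_le_add (mul_le_of_le_one_right zero_le hw0) (weightedL1_econv_le hw m u)

end WeightedL1

theorem weightedL1_indicator_Iic_ne_top {M : Type*} [Preorder M] [LocallyFiniteOrderBot M]
    {w u : M → ℝ≥0∞} (hw_top : ∀ α, w α ≠ ⊤)
    (hu_top : ∀ α, u α ≠ ⊤) (γ₀ : M) : weightedL1 w ((Set.Iic γ₀).indicator u) ≠ ⊤ := by
  rw [weightedL1, tsum_eq_sum (s := Finset.Iic γ₀) fun γ hγ => by
    rw [Set.indicator_of_notMem (by simpa using hγ) u, zero_mul]]
  refine ENNReal.sum_ne_top.mpr fun γ _ => ENNReal.mul_ne_top ?_ (hw_top γ)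
  by_cases hγ : γ ∈ Set.Iic γ₀
  · exact (Set.indicator_of_mem hγ u).trans_ne (hu_top γ)
  · exact (Set.indicator_of_notMem hγ u).trans_ne ENNReal.zero_ne_top

section Truncation

variable {M : Type*} [AddCommMonoid M] [PartialOrder M] [CanonicallyOrderedAdd M]
  [HasAntidiagonal M] [DecidableEq M]

theorem indicator_Iic_le_econv {u m : M → ℝ≥0∞} {K : ℝ≥0∞}
    (hu : ∀ γ, u γ ≤ (if γ = 0 then K else 0) + econv m u γ) (γ₀ γ : M) :
    (Set.Iic γ₀).indicator u γ ≤
      (if γ = 0 then K else 0) + econv m ((Set.Iic γ₀).indicator u) γ := by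
  by_cases hγ : γ ≤ γ₀
  · refine (Set.indicator_of_mem (Set.mem_Iic.mpr hγ) u).trans_le <| (hu γ).trans <|
      add_le_add le_rfl (Finset.sum_le_sum fun x hx => ?_)
    rw [Set.indicator_of_mem (Set.mem_Iic.mpr ((mem_antidiagonal.mp hx ▸ le_add_self).trans hγ))]
  · exact (Set.indicator_of_notMem (mt Set.mem_Iic.mp hγ) u).trans_le zero_le

theorem weightedL1_le_of_le_econv [LocallyFiniteOrderBot M] {w u m : M → ℝ≥0∞} {K : ℝ≥0∞}
    (hw : ∀ α β, w (α + β) ≤ w α * w β) (hw0 : w 0 ≤ 1) (hw_top : ∀ α, w α ≠ ⊤)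
    (hu_top : ∀ α, u α ≠ ⊤) (hm : weightedL1 w m < 1)
    (hu : ∀ γ, u γ ≤ (if γ = 0 then K else 0) + econv m u γ) :
    weightedL1 w u ≤ K / (1 - weightedL1 w m) := by
  rw [weightedL1, ENNReal.tsum_eq_iSup_sum]
  refine iSup_le fun S => le_trans ?_ <| weightedL1_le_div_of_le_econv hw hw0
    (weightedL1_indicator_Iic_ne_top hw_top hu_top (∑ α ∈ S, α)) hm
    (indicator_Iic_le_econv hu (∑ α ∈ S, α))
  calc ∑ α ∈ S, u α * w α = ∑ α ∈ S, (Set.Iic (∑ β ∈ S, β)).indicator u α * w α :=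
        Finset.sum_congr rfl fun α hα => by
          have hαS : α ≤ ∑ β ∈ S, β :=
            Finset.single_le_sum (f := fun β => β) (fun _ _ => zero_le) hα
          rw [Set.indicator_of_mem (Set.mem_Iic.mpr hαS)]
    _ ≤ _ := ENNReal.sum_le_tsum S

end Truncation

theorem Finsupp.sum_Iic_prod {σ R : Type*} [DecidableEq σ] [CommSemiring R] (γ : σ →₀ ℕ)
    (g : σ → ℕ → R) (hg : ∀ n, g n 0 = 1) :
    ∑ α ∈ Iic γ, α.prod g = ∏ n ∈ γ.support, ∑ k ∈ Iic (γ n), g n k := by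
  have hIic : Iic γ = γ.support.finsupp fun n => Iic (γ n) := by
    ext α
    simp only [mem_Iic, mem_finsupp_iff]
    refine ⟨fun h => ⟨Finsupp.support_mono h, fun n _ => h n⟩, fun h n => ?_⟩
    by_cases hn : n ∈ γ.support
    · exact h.2 n hn
    · rw [Finsupp.notMem_support_iff.mp (mt (fun h' => h.1 h') hn)]
      exact zero_le
  rw [hIic, prod_sum, Finset.finsupp, sum_map]
  refine Finset.sum_congr (by congr!) fun p _ => ?_
  simp only [Function.Embedding.coeFn_mk]
  rw [Finsupp.prod_of_support_subset _ (Finsupp.support_indicator_subset _ _) _ fun n _ => hg n,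
    ← prod_attach]
  exact Finset.prod_congr rfl fun n _ => by rw [Finsupp.indicator_of_mem n.2]

section Superexponential

variable {σ : Type*} {a : (σ →₀ ℕ) → ℝ}

theorem prod_pow_le_of_superexp (h0 : 1 ≤ a 0) (hgen : ∀ n, 0 ≤ a (Finsupp.single n 1))
    (hsup : ∀ α β, a α * a β ≤ a (α + β)) (α : σ →₀ ℕ) :
    α.prod (fun n k => a (Finsupp.single n 1) ^ k) ≤ a α := by
  have hprod_nonneg (β : σ →₀ ℕ) : 0 ≤ β.prod (fun n k => a (Finsupp.single n 1) ^ k) :=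
    prod_nonneg fun n _ => pow_nonneg (hgen n) _
  have hadd (β₁ β₂ : σ →₀ ℕ) (h₁ : β₁.prod (fun n k => a (Finsupp.single n 1) ^ k) ≤ a β₁)
      (h₂ : β₂.prod (fun n k => a (Finsupp.single n 1) ^ k) ≤ a β₂) :
      (β₁ + β₂).prod (fun n k => a (Finsupp.single n 1) ^ k) ≤ a (β₁ + β₂) := by
    rw [Finsupp.prod_add_index' (fun _ => pow_zero _) fun _ _ _ => pow_add _ _ _]
    exact (mul_le_mul h₁ h₂ (hprod_nonneg β₂) ((hprod_nonneg β₁).trans h₁)).trans (hsup _ _)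
  induction α using Finsupp.induction_linear with
  | zero => simpa using h0
  | add β₁ β₂ h₁ h₂ => exact hadd β₁ β₂ h₁ h₂
  | single n k =>
    induction k with
    | zero => simpa using h0
    | succ k ih =>
      rw [Finsupp.single_add]
      exact hadd _ _ ih (by simp)

theorem one_le_of_superexp (h0 : 1 ≤ a 0) (hgen : ∀ n, 1 ≤ a (Finsupp.single n 1))
    (hsup : ∀ α β, a α * a β ≤ a (α + β)) (α : σ →₀ ℕ) : 1 ≤ a α :=
  (one_le_prod fun n _ => one_le_pow₀ (hgen n)).trans
    (prod_pow_le_of_superexp h0 (fun n => zero_le_one.trans (hgen n)) hsup α)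

theorem one_lt_of_superexp (h0 : 1 ≤ a 0) (hgen : ∀ n, 1 < a (Finsupp.single n 1))
    (hsup : ∀ α β, a α * a β ≤ a (α + β)) {α : σ →₀ ℕ} (hα : α ≠ 0) : 1 < a α := by
  obtain ⟨n, hn⟩ := Finsupp.support_nonempty_iff.mpr hα
  have hle : Finsupp.single n 1 ≤ α := by
    simpa [Finsupp.single_le_iff, Nat.one_le_iff_ne_zero] using hn
  calc 1 < a (Finsupp.single n 1) := hgen n
    _ ≤ a (Finsupp.single n 1) * a (α - Finsupp.single n 1) :=
      le_mul_of_one_le_right (zero_le_one.trans (hgen n).le)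
        (one_le_of_superexp h0 (fun m => (hgen m).le) hsup _)
    _ ≤ a α := (hsup _ _).trans_eq (by rw [add_tsub_cancel_of_le hle])

theorem sum_inv_pow_le {y : ℝ} (hy : 1 < y) (s : Finset ℕ) :
    ∑ k ∈ s, y⁻¹ ^ k ≤ 1 + 1 / (y - 1) := by
  have h0 : 0 ≤ y⁻¹ := inv_nonneg.mpr (zero_le_one.trans hy.le)
  have h1 : y⁻¹ < 1 := inv_lt_one_of_one_lt₀ hy
  calc ∑ k ∈ s, y⁻¹ ^ k ≤ ∑' k, y⁻¹ ^ k :=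
        (summable_geometric_of_lt_one h0 h1).sum_le_tsum s fun k _ => pow_nonneg h0 k
    _ = 1 + 1 / (y - 1) := by
        have : y - 1 ≠ 0 := by linarith
        rw [tsum_geometric_of_lt_one h0 h1]
        field_simp
        ring

theorem inv_pow_le_prod_of_superexp (h0 : 1 ≤ a 0) (hgen : ∀ n, 0 < a (Finsupp.single n 1))
    (hsup : ∀ α β, a α * a β ≤ a (α + β)) (d : ℕ) (α : σ →₀ ℕ) :
    (a α ^ d)⁻¹ ≤ α.prod fun n k => (a (Finsupp.single n 1) ^ d)⁻¹ ^ k := by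
  have hP := prod_pow_le_of_superexp h0 (fun n => (hgen n).le) hsup α
  have hP_pos : 0 < α.prod (fun n k => a (Finsupp.single n 1) ^ k) :=
    prod_pos fun n _ => pow_pos (hgen n) _
  calc (a α ^ d)⁻¹ ≤ (α.prod (fun n k => a (Finsupp.single n 1) ^ k) ^ d)⁻¹ :=
        inv_anti₀ (pow_pos hP_pos d) (pow_le_pow_left₀ hP_pos.le hP d)
    _ = α.prod fun n k => (a (Finsupp.single n 1) ^ d)⁻¹ ^ k := by
        simp only [Finsupp.prod, ← prod_pow, ← prod_inv_distrib, ← pow_mul, inv_pow, mul_comm]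

theorem summable_inv_pow_of_superexp [DecidableEq σ] {d : ℕ} (hd : 1 ≤ d) (h0 : 1 ≤ a 0)
    (hgen : ∀ n, 1 < a (Finsupp.single n 1)) (hsup : ∀ α β, a α * a β ≤ a (α + β))
    (hreg : Summable fun n => 1 / (a (Finsupp.single n 1) ^ d - 1)) :
    Summable fun α => (a α ^ d)⁻¹ := by
  have hgen_d (n : σ) : 1 < a (Finsupp.single n 1) ^ d := one_lt_pow₀ (hgen n) (by omega)
  have hreg_nonneg (n : σ) : 0 ≤ 1 / (a (Finsupp.single n 1) ^ d - 1) :=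
    one_div_nonneg.mpr (sub_nonneg.mpr (hgen_d n).le)
  have hinv_nonneg (α : σ →₀ ℕ) : 0 ≤ (a α ^ d)⁻¹ :=
    inv_nonneg.mpr (pow_nonneg (zero_le_one.trans
      (one_le_of_superexp h0 (fun n => (hgen n).le) hsup α)) d)
  refine summable_of_sum_le (c := Real.exp (∑' n, 1 / (a (Finsupp.single n 1) ^ d - 1)))
    hinv_nonneg fun S => ?_
  set γ := ∑ α ∈ S, α
  calc ∑ α ∈ S, (a α ^ d)⁻¹ ≤ ∑ α ∈ Iic γ, (a α ^ d)⁻¹ :=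
        sum_le_sum_of_subset_of_nonneg (fun α hα => mem_Iic.mpr
          (single_le_sum (f := fun β => β) (fun _ _ => zero_le) hα)) fun α _ _ => hinv_nonneg α
    _ ≤ ∑ α ∈ Iic γ, α.prod fun n k => (a (Finsupp.single n 1) ^ d)⁻¹ ^ k :=
        sum_le_sum fun α _ => inv_pow_le_prod_of_superexp h0
          (fun n => zero_lt_one.trans (hgen n)) hsup d α
    _ = ∏ n ∈ γ.support, ∑ k ∈ Iic (γ n), (a (Finsupp.single n 1) ^ d)⁻¹ ^ k :=
        Finsupp.sum_Iic_prod γ _ fun n => pow_zero _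
    _ ≤ ∏ n ∈ γ.support, (1 + 1 / (a (Finsupp.single n 1) ^ d - 1)) :=
        prod_le_prod (fun n _ => sum_nonneg fun k _ => pow_nonneg (inv_nonneg.mpr
          (zero_le_one.trans (hgen_d n).le)) k) fun n _ => sum_inv_pow_le (hgen_d n) _
    _ ≤ Real.exp (∑ n ∈ γ.support, 1 / (a (Finsupp.single n 1) ^ d - 1)) :=
        Real.prod_one_add_le_exp_sum _ hreg_nonneg
    _ ≤ Real.exp (∑' n, 1 / (a (Finsupp.single n 1) ^ d - 1)) :=
        Real.exp_le_exp.mpr (hreg.sum_le_tsum _ fun n _ => hreg_nonneg n)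

end Superexponential

section InvWeight

variable {σ : Type*} {a : (σ →₀ ℕ) → ℝ}

noncomputable def invWeight (a : (σ →₀ ℕ) → ℝ) (α : σ →₀ ℕ) : ℝ≥0∞ := ENNReal.ofReal (a α)⁻¹

theorem invWeight_le_one {α : σ →₀ ℕ} (h : 1 ≤ a α) : invWeight a α ≤ 1 :=
  ENNReal.ofReal_le_one.mpr (inv_le_one_of_one_le₀ h)

theorem invWeight_lt_one {α : σ →₀ ℕ} (h : 1 < a α) : invWeight a α < 1 :=
  ENNReal.ofReal_lt_one.mpr (inv_lt_one_of_one_lt₀ h)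

theorem invWeight_pow_add_le (ha : ∀ α, 0 < a α) (hsup : ∀ α β, a α * a β ≤ a (α + β))
    (r : ℕ) (α β : σ →₀ ℕ) :
    (invWeight a ^ r) (α + β) ≤ (invWeight a ^ r) α * (invWeight a ^ r) β := by
  simp only [Pi.pow_apply, ← mul_pow]
  refine pow_le_pow_left' ?_ r
  rw [invWeight, invWeight, invWeight, ← ENNReal.ofReal_mul (inv_nonneg.mpr (ha α).le),
    ← mul_inv]
  exact ENNReal.ofReal_le_ofReal (inv_anti₀ (mul_pos (ha α) (ha β)) (hsup α β))

theorem wsum_eq_tsum_invWeight (ha : ∀ α, 0 ≤ a α) (p : ℕ) (f : (σ →₀ ℕ) → ℂ) :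
    wsum a p f = ∑' α, ‖f α‖ₑ ^ 2 * invWeight a α ^ p := by
  refine tsum_congr fun α => ?_
  rw [div_eq_mul_inv, ENNReal.ofReal_mul (by positivity), ← inv_pow,
    ENNReal.ofReal_pow (inv_nonneg.mpr (ha α)), ENNReal.ofReal_pow (norm_nonneg _), ofReal_norm,
    invWeight]

theorem tsum_invWeight_pow_ne_top (ha : ∀ α, 0 ≤ a α) {d : ℕ}
    (hsum : Summable fun α => (a α ^ d)⁻¹) : ∑' α, invWeight a α ^ d ≠ ⊤ := by
  have : ∑' α, invWeight a α ^ d = ENNReal.ofReal (∑' α, (a α ^ d)⁻¹) := by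
    rw [ENNReal.ofReal_tsum_of_nonneg (fun α => inv_nonneg.mpr (pow_nonneg (ha α) d)) hsum]
    exact tsum_congr fun α => by
      rw [invWeight, ← ENNReal.ofReal_pow (inv_nonneg.mpr (ha α)), inv_pow]
  exact this ▸ ENNReal.ofReal_ne_top

theorem wsum_two_mul_le (ha : ∀ α, 0 ≤ a α) (r : ℕ) (g : (σ →₀ ℕ) → ℂ) :
    wsum a (2 * r) g ≤ weightedL1 (invWeight a ^ r) (fun α => ‖g α‖ₑ) ^ 2 := by
  rw [wsum_eq_tsum_invWeight ha]
  calc ∑' α, ‖g α‖ₑ ^ 2 * invWeight a α ^ (2 * r)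
      = ∑' α, (‖g α‖ₑ * invWeight a α ^ r) ^ 2 := by
        simp_rw [mul_pow, ← pow_mul, mul_comm r 2]
    _ ≤ _ := ENNReal.tsum_sq_le_sq_tsum _

end InvWeight

section Convolution

variable {A : Type*} [DecidableEq A]

theorem conv_zero (f g : (A →₀ ℕ) → ℂ) : conv f g 0 = f 0 * g 0 := by
  simp [conv]

theorem conv_apply_eq_coeff_mul (φ ψ : MvPowerSeries A ℂ) (γ : A →₀ ℕ) :
    conv φ ψ γ = MvPowerSeries.coeff γ (φ * ψ) := by
  rw [MvPowerSeries.coeff_mul]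
  rfl

theorem conv_inv_eq_convOne {φ : MvPowerSeries A ℂ} (hφ : MvPowerSeries.constantCoeff φ ≠ 0) :
    conv φ (φ⁻¹ : MvPowerSeries A ℂ) = convOne := by
  ext γ
  refine (conv_apply_eq_coeff_mul φ φ⁻¹ γ).trans ?_
  rw [MvPowerSeries.mul_inv_cancel _ hφ, MvPowerSeries.coeff_one]
  rfl

theorem conv_eq_mul_add (f g : (A →₀ ℕ) → ℂ) (γ : A →₀ ℕ) :
    conv f g γ = f 0 * g γ + ∑ x ∈ antidiagonal γ, (if x.1 = 0 then 0 else f x.1) * g x.2 := by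
  have hsplit : ∀ x ∈ antidiagonal γ, f x.1 * g x.2 =
      (if x = (0, γ) then f 0 * g γ else 0) + (if x.1 = 0 then 0 else f x.1) * g x.2 := by
    intro x hx
    by_cases h : x.1 = 0
    · have : x = (0, γ) := Prod.ext h (by simpa [h] using mem_antidiagonal.mp hx)
      simp [this]
    · simp [h, show x ≠ (0, γ) from fun e => h (by simp [e])]
  rw [conv, sum_congr rfl hsplit, sum_add_distrib, sum_ite_eq' _ _ _]
  simp

noncomputable def normTail (f : (A →₀ ℕ) → ℂ) (α : A →₀ ℕ) : ℝ≥0∞ :=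
  if α = 0 then 0 else ‖f 0‖ₑ⁻¹ * ‖f α‖ₑ

theorem enorm_le_econv_of_conv_eq_convOne {f g : (A →₀ ℕ) → ℂ} (hfg : conv f g = convOne)
    (γ : A →₀ ℕ) :
    ‖g γ‖ₑ ≤ (if γ = 0 then ‖f 0‖ₑ⁻¹ else 0) + econv (normTail f) (fun α => ‖g α‖ₑ) γ := by
  have hf0 : ‖f 0‖ₑ ≠ 0 := by
    have := congrFun hfg 0
    rw [conv_zero, convOne, if_pos rfl] at this
    simpa using left_ne_zero_of_mul_eq_one this
  have hγ : f 0 * g γ =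
      convOne γ - ∑ x ∈ antidiagonal γ, (if x.1 = 0 then 0 else f x.1) * g x.2 := by
    rw [← hfg, conv_eq_mul_add, add_sub_cancel_right]
  calc ‖g γ‖ₑ = ‖f 0‖ₑ⁻¹ * ‖f 0 * g γ‖ₑ := by
        rw [enorm_mul, ← mul_assoc, ENNReal.inv_mul_cancel hf0 enorm_ne_top, one_mul]
    _ ≤ ‖f 0‖ₑ⁻¹ * (‖convOne γ‖ₑ +
          ∑ x ∈ antidiagonal γ, ‖(if x.1 = 0 then 0 else f x.1)‖ₑ * ‖g x.2‖ₑ) := by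
        rw [hγ]
        gcongr
        refine (enorm_sub_le).trans (add_le_add le_rfl ((enorm_sum_le _ _).trans ?_))
        simp only [enorm_mul, le_refl]
    _ = _ := by
        rw [mul_add, Finset.mul_sum, econv]
        congr 1
        · by_cases h : γ = 0 <;> simp [convOne, h]
        · refine sum_congr rfl fun x _ => ?_
          by_cases h : x.1 = 0 <;> simp [normTail, h, mul_assoc]

theorem tsum_normTail_mul_invWeight_pow_ne_top {a : (A →₀ ℕ) → ℝ} (ha : ∀ α, 1 ≤ a α)
    {d p : ℕ} (hsum : Summable fun α => (a α ^ d)⁻¹) {f : (A →₀ ℕ) → ℂ} (hf0 : f 0 ≠ 0)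
    (hf : wsum a p f < ⊤) : ∑' α, normTail f α * invWeight a α ^ (p + d) ≠ ⊤ := by
  have ha₀ (α : A →₀ ℕ) : 0 ≤ a α := zero_le_one.trans (ha α)
  refine ne_top_of_le_ne_top ?_ (ENNReal.tsum_le_tsum fun α =>
    mul_le_mul_left (show normTail f α ≤ ‖f 0‖ₑ⁻¹ * ‖f α‖ₑ by unfold normTail; split_ifs <;> simp) _)
  simp_rw [mul_assoc, ENNReal.tsum_mul_left]
  refine ENNReal.mul_ne_top (by simpa using hf0) (ne_top_of_le_ne_top ?_
    (ENNReal.tsum_mul_pow_add_le (fun α => invWeight_le_one (ha α)) _ p d))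
  rw [← wsum_eq_tsum_invWeight ha₀]
  exact ENNReal.add_ne_top.mpr ⟨hf.ne, tsum_invWeight_pow_ne_top ha₀ hsum⟩

end Convolution

theorem invertible_iff_expectation_ne_zero_general {A : Type*} [DecidableEq A]
    (d : ℕ) (hd : 1 ≤ d) (a : (A →₀ ℕ) → ℝ)
    (h0 : a 0 = 1)
    (hgen : ∀ n : A, 1 < a (Finsupp.single n 1))
    (hreg : Summable fun n : A => 1 / ((a (Finsupp.single n 1)) ^ d - 1))
    (hsup : ∀ α β : A →₀ ℕ, a α * a β ≤ a (α + β))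
    (f : (A →₀ ℕ) → ℂ) (p : ℕ) (hf : wsum a p f < ⊤) :
    (∃ (g : (A →₀ ℕ) → ℂ) (r : ℕ), wsum a r g < ⊤ ∧ conv f g = convOne) ↔ f 0 ≠ 0 := by
  refine ⟨fun ⟨g, _, _, hfg⟩ hf0 => by simpa [conv_zero, convOne, hf0] using congrFun hfg 0,
    fun hf0 => ?_⟩
  have ha : ∀ α, 1 ≤ a α := one_le_of_superexp h0.ge (fun n => (hgen n).le) hsup
  have ha₀ : ∀ α, 0 < a α := fun α => zero_lt_one.trans_le (ha α)
  have hw : ∀ r α, (invWeight a ^ r) α ≤ 1 := fun r α => pow_le_one' (invWeight_le_one (ha α)) r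
  obtain ⟨r, hr⟩ : ∃ r, weightedL1 (invWeight a ^ r) (normTail f) < 1 :=
    ENNReal.exists_tsum_mul_pow_lt
      (tsum_normTail_mul_invWeight_pow_ne_top ha
        (summable_inv_pow_of_superexp hd h0.ge hgen hsup hreg) hf0 hf)
      (fun α hα => invWeight_lt_one (one_lt_of_superexp h0.ge hgen hsup
        (fun h => hα (by simp [normTail, h])))) one_pos
  have hfg := conv_inv_eq_convOne (φ := f) hf0
  have hg := weightedL1_le_of_le_econv (invWeight_pow_add_le ha₀ hsup r) (hw r 0)
    (fun α => ne_top_of_le_ne_top ENNReal.one_ne_top (hw r α)) (fun _ => enorm_ne_top) hr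
    (enorm_le_econv_of_conv_eq_convOne hfg)
  refine ⟨_, 2 * r, (wsum_two_mul_le (fun α => (ha₀ α).le) r _).trans_lt
    (ENNReal.pow_lt_top (hg.trans_lt ?_)), hfg⟩
  exact ENNReal.div_lt_top (by simpa using hf0) (tsub_pos_of_lt hr).ne'

/-- In a Våge space, `f` is invertible (has a convolution inverse in the space) if and
only if its generalized expectation `f 0` is nonzero. -/
theorem invertible_iff_expectation_ne_zero {A : Type*} [DecidableEq A]
    (d : ℕ) (hd : 1 ≤ d) (a : (A →₀ ℕ) → ℝ)
    (hpos : ∀ α, 0 < a α)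
    (h0 : a 0 = 1)
    (hgen : ∀ n : A, 1 < a (Finsupp.single n 1))
    (hreg : Summable fun n : A => 1 / ((a (Finsupp.single n 1)) ^ d - 1))
    (hsup : ∀ α β : A →₀ ℕ, a α * a β ≤ a (α + β))
    (f : (A →₀ ℕ) → ℂ) (p : ℕ) (hf : wsum a p f < ⊤) :
    (∃ (g : (A →₀ ℕ) → ℂ) (r : ℕ), wsum a r g < ⊤ ∧ conv f g = convOne) ↔ f 0 ≠ 0 :=
  invertible_iff_expectation_ne_zero_general d hd a h0 hgen hreg hsup f p hf
end

section
/- Let A and B be index types, a : (A →₀ ℕ) → ℝ and b : (B →₀ ℕ) → ℝ positive functions, and p, q ∈ ℕ. Let ψ : (A →₀ ℕ) × (B →₀ ℕ) → ℂ with T := ∑_{(α,β)} |ψ(α,β)|² a_α^{p} b_β^{q} < ∞ and let f : (B →₀ ℕ) → ℂ with F := ∑_{β} |f_β|² b_β^{−q} < ∞. Then for each α the family (conj(f_β)·ψ(α,β))_β is summable, and ∑_{α} |∑_{β} conj(f_β)·ψ(α,β)|² a_α^{p} ≤ F · T. -/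
/-!
For fixed `α`, the weighted Cauchy–Schwarz inequality with weights `b β ^ q` bounds
`‖∑_β conj (f β) ψ (α, β)‖²` by `F · ∑_β ‖ψ (α, β)‖² b β ^ q`, and it also gives the summability
of the row. Multiplying by `a α ^ p` and summing over `α` (Tonelli in `ℝ≥0∞`) yields `F · T`.
-/

open scoped ENNReal ComplexConjugate

lemma summable_of_tsum_ofReal_ne_top {ι : Type*} {f : ι → ℝ} (hf : ∀ i, 0 ≤ f i)
    (h : ∑' i, ENNReal.ofReal (f i) ≠ ∞) : Summable f := by
  simpa only [ENNReal.toReal_ofReal (hf _)] using ENNReal.summable_toReal h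

lemma summable_and_tsum_sq_le_tsum_mul_tsum {ι : Type*} {r f g : ι → ℝ}
    (hr : ∀ i, 0 ≤ r i) (hf : ∀ i, 0 ≤ f i) (hg : ∀ i, 0 ≤ g i)
    (hrfg : ∀ i, r i ^ 2 ≤ f i * g i) (hfs : Summable f) (hgs : Summable g) :
    Summable r ∧ (∑' i, r i) ^ 2 ≤ (∑' i, f i) * ∑' i, g i := by
  -- `r ≤ (f + g) / 2`, since `r ^ 2 ≤ f g ≤ ((f + g) / 2) ^ 2`
  have hrs : Summable r := ((hfs.add hgs).div_const 2).of_nonneg_of_le hr fun i => by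
    nlinarith [hrfg i, sq_nonneg (f i - g i), hf i, hg i, hr i]
  refine ⟨hrs, le_of_tendsto_of_tendsto' (hrs.hasSum.pow 2)
    (Filter.Tendsto.mul hfs.hasSum hgs.hasSum) fun s => ?_⟩
  exact Finset.sum_sq_le_sum_mul_sum_of_sq_le_mul s (fun i _ => hf i) (fun i _ => hg i)
    fun i _ => hrfg i

lemma summable_mul_and_sq_norm_tsum_mul_le {ι R : Type*} [NormedRing R] [CompleteSpace R]
    {u v : ι → R} {w : ι → ℝ} (hw : ∀ i, 0 < w i)
    (hu : Summable fun i => ‖u i‖ ^ 2 / w i) (hv : Summable fun i => ‖v i‖ ^ 2 * w i) :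
    Summable (fun i => u i * v i) ∧
      ‖∑' i, u i * v i‖ ^ 2 ≤ (∑' i, ‖u i‖ ^ 2 / w i) * ∑' i, ‖v i‖ ^ 2 * w i := by
  have hsq : ∀ i, ‖u i * v i‖ ^ 2 ≤ ‖u i‖ ^ 2 / w i * (‖v i‖ ^ 2 * w i) := fun i => by
    calc ‖u i * v i‖ ^ 2 ≤ (‖u i‖ * ‖v i‖) ^ 2 := by gcongr; exact norm_mul_le _ _
      _ = ‖u i‖ ^ 2 / w i * (‖v i‖ ^ 2 * w i) := by field_simp [(hw i).ne']
  obtain ⟨hs, hle⟩ := summable_and_tsum_sq_le_tsum_mul_tsum (fun i => norm_nonneg _)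
    (fun i => by have := hw i; positivity) (fun i => by have := hw i; positivity) hsq hu hv
  exact ⟨hs.of_norm, (pow_le_pow_left₀ (norm_nonneg _) (norm_tsum_le_tsum_norm hs) 2).trans hle⟩

/-- The key tensor-product estimate: if `T = ∑ |ψ(α,β)|² a α ^ p ⬝ b β ^ q < ∞` and
`F = ∑ |f β|² b β ^ (-q) < ∞`, then for each `α` the family `conj (f β) ⬝ ψ (α, β)` is
summable and `∑_α |∑_β conj (f β) ⬝ ψ (α, β)|² a α ^ p ≤ F ⬝ T`. -/
theorem tensor_pairing_estimate
    {A B : Type*} (a : (A →₀ ℕ) → ℝ) (b : (B →₀ ℕ) → ℝ)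
    (hapos : ∀ α, 0 < a α) (hbpos : ∀ β, 0 < b β)
    (p q : ℕ)
    (ψ : (A →₀ ℕ) × (B →₀ ℕ) → ℂ)
    (T : ℝ≥0∞)
    (hT : T = ∑' x : (A →₀ ℕ) × (B →₀ ℕ),
        ENNReal.ofReal (‖ψ x‖ ^ 2 * (a x.1) ^ p * (b x.2) ^ q))
    (hTfin : T < ⊤)
    (f : (B →₀ ℕ) → ℂ)
    (F : ℝ≥0∞)
    (hF : F = ∑' β : B →₀ ℕ, ENNReal.ofReal (‖f β‖ ^ 2 / (b β) ^ q))
    (hFfin : F < ⊤) :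
    (∀ α : A →₀ ℕ, Summable fun β : B →₀ ℕ => conj (f β) * ψ (α, β)) ∧
    (∑' α : A →₀ ℕ,
        ENNReal.ofReal (‖∑' β : B →₀ ℕ, conj (f β) * ψ (α, β)‖ ^ 2 * (a α) ^ p))
      ≤ F * T := by
  have ha : ∀ α, 0 < a α ^ p := fun α => pow_pos (hapos α) p
  have hb : ∀ β, 0 < b β ^ q := fun β => pow_pos (hbpos β) q
  have hf0 : ∀ β, 0 ≤ ‖f β‖ ^ 2 / b β ^ q := fun β => by have := hb β; positivity
  have hψ0 : ∀ x : (A →₀ ℕ) × (B →₀ ℕ), 0 ≤ ‖ψ x‖ ^ 2 * a x.1 ^ p * b x.2 ^ q := fun x => by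
    have := ha x.1; have := hb x.2; positivity
  have hfs := summable_of_tsum_ofReal_ne_top hf0 (hF ▸ hFfin.ne)
  have hψs := summable_of_tsum_ofReal_ne_top hψ0 (hT ▸ hTfin.ne)
  have hrow : ∀ α, (fun β => ‖ψ (α, β)‖ ^ 2 * a α ^ p * b β ^ q) =
      fun β => a α ^ p * (‖ψ (α, β)‖ ^ 2 * b β ^ q) := fun α => funext fun β => by ring
  have hpair := fun α => summable_mul_and_sq_norm_tsum_mul_le (u := fun β => conj (f β))
    (v := fun β => ψ (α, β)) hb (by simpa only [RCLike.norm_conj] using hfs)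
    ((summable_mul_left_iff (ha α).ne').1 (hrow α ▸ hψs.prod_factor α))
  simp only [RCLike.norm_conj] at hpair
  have hbound : ∀ α, ‖∑' β, conj (f β) * ψ (α, β)‖ ^ 2 * a α ^ p ≤
      (∑' β, ‖f β‖ ^ 2 / b β ^ q) * ∑' β, ‖ψ (α, β)‖ ^ 2 * a α ^ p * b β ^ q := fun α => by
    rw [hrow α, tsum_mul_left]
    nlinarith [(hpair α).2, ha α]
  refine ⟨fun α => (hpair α).1, ?_⟩
  calc _ ≤ ∑' α, F * ∑' β, ENNReal.ofReal (‖ψ (α, β)‖ ^ 2 * a α ^ p * b β ^ q) :=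
        ENNReal.tsum_le_tsum fun α => by
          rw [hF, ← ENNReal.ofReal_tsum_of_nonneg hf0 hfs,
            ← ENNReal.ofReal_tsum_of_nonneg (fun β => hψ0 (α, β)) (hψs.prod_factor α),
            ← ENNReal.ofReal_mul (tsum_nonneg hf0)]
          exact ENNReal.ofReal_le_ofReal (hbound α)
    _ = F * T := by rw [ENNReal.tsum_mul_left, hT, ENNReal.tsum_prod']
end
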